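/- arXiv:1006.3928 — 3 statements merged into one kernel-verified Lean document; each statement's English description precedes it below -/
import Mathlib

section
/- With the setup of the previous two identities (Λ skew-symmetric m×m, Λ(−B̃) = [Iₙ;0], B = Rᵀ − R the principal part of B̃, Ĩ = [Iₙ;0], R̃ with principal part R, ⟨e,f⟩ = eᵀ(Iₙ−R)f), for all m, l, e, f ∈ ℤⁿ one has Λ(B̃e − (Ĩ−R̃)m, B̃f − (Ĩ−R̃)l) = Λ((Ĩ−R̃)m, (Ĩ−R̃)l) + ⟨e,f⟩ − ⟨f,e⟩ − ⟨e,l⟩ + ⟨f,m⟩. -/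
/-!
Transposing `Λ(-B̃) = Ĩ` with `Λᵀ = -Λ` gives `B̃ᵀΛ = Ĩᵀ`, so `Λ(B̃x, v) = xᵀ v_top` for every `v`,
where `v_top` is the vector of the first `n` coordinates of `v`. Expanding the left-hand side by
bilinearity, the terms involving `B̃` are therefore `eᵀBf`, `eᵀ(Iₙ - R)l` and (after one use of
skew-symmetry) `-fᵀ(Iₙ - R)m`, and `eᵀBf = eᵀ(Rᵀ - R)f = ⟨e,f⟩ - ⟨f,e⟩`.
-/

open Matrix

namespace Matrix

variable {ι κ ν α : Type*} [Fintype ι] [CommRing α]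

theorem dotProduct_mulVec_eq_neg_of_transpose_eq_neg {Λ : Matrix ι ι α} (hΛ : Λᵀ = -Λ)
    (u v : ι → α) : u ⬝ᵥ Λ *ᵥ v = -(v ⬝ᵥ Λ *ᵥ u) := by
  rw [dotProduct_mulVec, ← mulVec_transpose, hΛ, neg_mulVec, neg_dotProduct, dotProduct_comm]

theorem transpose_mul_eq_of_mul_neg_eq {Λ : Matrix ι ι α} (hΛ : Λᵀ = -Λ) {B I : Matrix ι κ α}
    (h : Λ * -B = I) : Bᵀ * Λ = Iᵀ := by
  rw [← h, transpose_mul, transpose_neg, hΛ, Matrix.neg_mul, Matrix.mul_neg, neg_neg]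

theorem mulVec_dotProduct_mulVec [Fintype κ] (B : Matrix ι κ α) (Λ : Matrix ι ι α) (x : κ → α)
    (v : ι → α) : B *ᵥ x ⬝ᵥ Λ *ᵥ v = x ⬝ᵥ (Bᵀ * Λ) *ᵥ v := by
  rw [← mulVec_mulVec, dotProduct_mulVec x, vecMul_transpose]

theorem dotProduct_transpose_sub_mulVec [DecidableEq ι] (R : Matrix ι ι α) (e f : ι → α) :
    e ⬝ᵥ (Rᵀ - R) *ᵥ f = e ⬝ᵥ (1 - R) *ᵥ f - f ⬝ᵥ (1 - R) *ᵥ e := by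
  rw [dotProduct_mulVec f, dotProduct_comm _ e, ← mulVec_transpose, transpose_sub, transpose_one]
  simp only [sub_mulVec, dotProduct_sub]
  abel

theorem mulVec_comp (A : Matrix ν ι α) (e : κ → ν) (x : ι → α) :
    (A *ᵥ x) ∘ e = A.submatrix e id *ᵥ x :=
  rfl

theorem one_submatrix_mulVec [DecidableEq ι] (e : κ → ι) (v : ι → α) :
    (1 : Matrix ι ι α).submatrix e id *ᵥ v = v ∘ e := by
  rw [← mulVec_comp, one_mulVec]

end Matrix

/-- Corollary 3.2:
`Λ(B̃e − (Ĩ−R̃)m, B̃f − (Ĩ−R̃)l) = Λ((Ĩ−R̃)m, (Ĩ−R̃)l) + ⟨e,f⟩ − ⟨f,e⟩ − ⟨e,l⟩ + ⟨f,m⟩`. -/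
theorem stmt3 (m n : ℕ) (hmn : n ≤ m)
    (Λ : Matrix (Fin m) (Fin m) ℤ) (hskew : Λᵀ = -Λ)
    (Bt : Matrix (Fin m) (Fin n) ℤ)
    (It : Matrix (Fin m) (Fin n) ℤ)
    (hIt : It = Matrix.of (fun (i : Fin m) (j : Fin n) =>
      if (i : ℕ) = (j : ℕ) then (1 : ℤ) else 0))
    (hcomp : Λ * (-Bt) = It)
    (Rt : Matrix (Fin m) (Fin n) ℤ) (R : Matrix (Fin n) (Fin n) ℤ)
    (hR : ∀ (i j : Fin n), Rt (Fin.castLE hmn i) j = R i j)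
    (B : Matrix (Fin n) (Fin n) ℤ)
    (hB : ∀ (i j : Fin n), Bt (Fin.castLE hmn i) j = B i j)
    (hBR : B = Rᵀ - R)
    (mm l e f : Fin n → ℤ) :
    (Bt.mulVec e - (It - Rt).mulVec mm) ⬝ᵥ (Λ.mulVec (Bt.mulVec f - (It - Rt).mulVec l)) =
      ((It - Rt).mulVec mm) ⬝ᵥ (Λ.mulVec ((It - Rt).mulVec l))
        + e ⬝ᵥ ((1 - R).mulVec f) - f ⬝ᵥ ((1 - R).mulVec e)
        - e ⬝ᵥ ((1 - R).mulVec l) + f ⬝ᵥ ((1 - R).mulVec mm) := by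
  let top := Fin.castLE hmn
  have hIt_eq : It = (1 : Matrix (Fin m) (Fin m) ℤ).submatrix id top := by
    ext i j
    simp [hIt, top, one_apply, Fin.ext_iff]
  have hpair (x : Fin n → ℤ) (v : Fin m → ℤ) : Bt *ᵥ x ⬝ᵥ Λ *ᵥ v = x ⬝ᵥ v ∘ top := by
    rw [mulVec_dotProduct_mulVec, transpose_mul_eq_of_mul_neg_eq hskew hcomp, hIt_eq,
      transpose_submatrix, transpose_one, one_submatrix_mulVec]
  have hBtop : Bt.submatrix top id = B := ext hB
  have hXtop : (It - Rt).submatrix top id = 1 - R := by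
    ext i j
    simp [hIt, hR, top, one_apply, Fin.ext_iff]
  rw [mulVec_sub, sub_dotProduct, dotProduct_sub, dotProduct_sub,
    dotProduct_mulVec_eq_neg_of_transpose_eq_neg hskew ((It - Rt) *ᵥ mm), hpair, hpair, hpair,
    mulVec_comp, mulVec_comp, mulVec_comp, hBtop, hXtop, hBR, dotProduct_transpose_sub_mulVec]
  ring
end

section
/- In the quantum torus on ℤ⁴ for the Kronecker ice quiver with Λ = [[0,0,1,0],[0,0,0,1],[−1,0,0,−2],[0,−1,2,0]] (relations X^a X^b = q^{Λ(a,b)/2} X^{a+b}), define X_{S₁} = X^{(−1,2,1,0)} + X^{(−1,0,0,0)}, X_{S₂} = X^{(0,−1,0,1)} + X^{(2,−1,0,0)}, and X_δ = X^{(−1,1,1,1)} + X^{(1,−1,0,0)} + X^{(−1,−1,0,1)}. Then X_δ = X_{S₁}·X_{S₂} − q^{−3/2}·X^{(1,0,0,0)}X^{(0,1,0,0)}X^{(0,0,1,0)}. -/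
open Matrix

/-!
Each of the four products in `X_{S₁} X_{S₂}` is a single monomial, and only
`X^{(-1,2,1,0)} X^{(2,-1,0,0)} = q^{-1} X^{(1,1,1,0)}` carries a nontrivial power of `q`;
the same monomial `q^{-1} X^{(1,1,1,0)}` is `q^{-3/2} X₁ X₂ X₃`, so subtracting it leaves `X_δ`.
-/

section TwistedMonomials

variable {ι T : Type*} [Fintype ι] [Ring T] {v : Tˣ} {X : (ι → ℤ) → T} {Λ : Matrix ι ι ℤ}

theorem units_val_zpow_mul_val_zpow_mul (v : Tˣ) (m n : ℤ) (x : T) :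
    ((v ^ m : Tˣ) : T) * (((v ^ n : Tˣ) : T) * x) = ((v ^ (m + n) : Tˣ) : T) * x := by
  rw [← mul_assoc, ← Units.val_mul, ← _root_.zpow_add]

variable (hmul : ∀ a b : ι → ℤ, X a * X b = ((v ^ (a ⬝ᵥ Λ.mulVec b) : Tˣ) : T) * X (a + b))
include hmul

theorem X_mul_X_eq_of_pairing_eq {a b c : ι → ℤ} {k : ℤ} (hk : a ⬝ᵥ Λ *ᵥ b = k)
    (hc : a + b = c) : X a * X b = ((v ^ k : Tˣ) : T) * X c := by
  rw [hmul, hk, hc]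

theorem X_mul_X_eq_of_pairing_eq_zero {a b c : ι → ℤ} (hk : a ⬝ᵥ Λ *ᵥ b = 0)
    (hc : a + b = c) : X a * X b = X c := by
  rw [X_mul_X_eq_of_pairing_eq hmul hk hc, zpow_zero, Units.val_one, one_mul]

theorem X_mul_X_mul_X_eq_of_pairing_eq {a b c d : ι → ℤ} {k l : ℤ}
    (hk : a ⬝ᵥ Λ *ᵥ b = k) (hl : (a + b) ⬝ᵥ Λ *ᵥ c = l) (hd : a + b + c = d) :
    X a * X b * X c = ((v ^ (k + l) : Tˣ) : T) * X d := by
  rw [X_mul_X_eq_of_pairing_eq hmul hk rfl, mul_assoc, X_mul_X_eq_of_pairing_eq hmul hl hd,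
    units_val_zpow_mul_val_zpow_mul]

end TwistedMonomials

theorem stmt11_general (T : Type*) [Ring T] (v : Tˣ)
    (X : (Fin 4 → ℤ) → T)
    (Λ : Matrix (Fin 4) (Fin 4) ℤ)
    (hΛ : Λ = !![0, 0, 1, 0; 0, 0, 0, 1; -1, 0, 0, -2; 0, -1, 2, 0])
    (hmul : ∀ a b : Fin 4 → ℤ,
      X a * X b = ((v ^ (a ⬝ᵥ Λ.mulVec b) : Tˣ) : T) * X (a + b)) :
    X ![-1, 1, 1, 1] + X ![1, -1, 0, 0] + X ![-1, -1, 0, 1] =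
      (X ![-1, 2, 1, 0] + X ![-1, 0, 0, 0]) * (X ![0, -1, 0, 1] + X ![2, -1, 0, 0]) -
        ((v ^ (-3 : ℤ) : Tˣ) : T) *
          (X ![1, 0, 0, 0] * X ![0, 1, 0, 0] * X ![0, 0, 1, 0]) := by
  subst hΛ
  have h₁₁ : X ![-1, 2, 1, 0] * X ![0, -1, 0, 1] = X ![-1, 1, 1, 1] :=
    X_mul_X_eq_of_pairing_eq_zero hmul (by decide) (by decide)
  have h₁₂ : X ![-1, 2, 1, 0] * X ![2, -1, 0, 0] = ((v ^ (-2 : ℤ) : Tˣ) : T) * X ![1, 1, 1, 0] :=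
    X_mul_X_eq_of_pairing_eq hmul (by decide) (by decide)
  have h₂₁ : X ![-1, 0, 0, 0] * X ![0, -1, 0, 1] = X ![-1, -1, 0, 1] :=
    X_mul_X_eq_of_pairing_eq_zero hmul (by decide) (by decide)
  have h₂₂ : X ![-1, 0, 0, 0] * X ![2, -1, 0, 0] = X ![1, -1, 0, 0] :=
    X_mul_X_eq_of_pairing_eq_zero hmul (by decide) (by decide)
  have h₁₂₃ : X ![1, 0, 0, 0] * X ![0, 1, 0, 0] * X ![0, 0, 1, 0] =
      ((v ^ (0 + 1 : ℤ) : Tˣ) : T) * X ![1, 1, 1, 0] :=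
    X_mul_X_mul_X_eq_of_pairing_eq hmul (by decide) (by decide) (by decide)
  rw [mul_add, add_mul, add_mul, h₁₁, h₁₂, h₂₁, h₂₂, h₁₂₃,
    units_val_zpow_mul_val_zpow_mul, show (-3 : ℤ) + (0 + 1) = -2 by norm_num]
  abel

/-- Lemma 5.1: in the quantum torus on `ℤ⁴` for the Kronecker ice quiver
(with `v = q^{1/2}`, so `q^{-3/2} = v^{-3}`),
`X_δ = X_{S₁} X_{S₂} − q^{−3/2} X₁ X₂ X₃`. -/
theorem stmt11 (T : Type*) [Ring T] (v : Tˣ)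
    (hv : ∀ t : T, (v : T) * t = t * (v : T))
    (X : (Fin 4 → ℤ) → T)
    (Λ : Matrix (Fin 4) (Fin 4) ℤ)
    (hΛ : Λ = !![0, 0, 1, 0; 0, 0, 0, 1; -1, 0, 0, -2; 0, -1, 2, 0])
    (hmul : ∀ a b : Fin 4 → ℤ,
      X a * X b = ((v ^ (a ⬝ᵥ Λ.mulVec b) : Tˣ) : T) * X (a + b)) :
    X ![-1, 1, 1, 1] + X ![1, -1, 0, 0] + X ![-1, -1, 0, 1] =
      (X ![-1, 2, 1, 0] + X ![-1, 0, 0, 0]) * (X ![0, -1, 0, 1] + X ![2, -1, 0, 0]) -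
        ((v ^ (-3 : ℤ) : Tˣ) : T) *
          (X ![1, 0, 0, 0] * X ![0, 1, 0, 0] * X ![0, 0, 1, 0]) :=
  stmt11_general T v X Λ hΛ hmul
end

section
/- Let A be a finite-dimensional hereditary algebra over a field k, and let M, N be A-modules with dim_k Ext¹(M,N) = 1, N ≇ 0. Let 0 → N → E → M → 0 be a non-split short exact sequence. Then E ≇ M ⊕ N. -/
/-!
If `E ≅ M × N`, then `0 → Hom(M, N) → Hom(M, E) → Hom(M, M)` is exact and
`dim_k Hom(M, E) = dim_k Hom(M, N) + dim_k Hom(M, M)`, so the last map is onto; a preimage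
of `id_M` is a section of `E → M`, contradicting non-splitness.
-/

open CategoryTheory ModuleCat Module

noncomputable section

/-- `dim_k Extⁿ_A(X,Y)`. -/
def extDim (k : Type) [Field k] (A : Type) [Ring A] [Algebra k A]
    (n : ℕ) (X Y : ModuleCat A) : ℕ :=
  finrank k (((Ext k (ModuleCat A) n).obj (Opposite.op X)).obj Y)

theorem Function.Exact.surjective_of_finrank_eq_add {K U V W : Type*} [DivisionRing K]
    [AddCommGroup U] [AddCommGroup V] [AddCommGroup W]
    [Module K U] [Module K V] [Module K W] [FiniteDimensional K V] [FiniteDimensional K W]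
    {f : U →ₗ[K] V} {g : V →ₗ[K] W} (hfg : Function.Exact f g) (hf : Function.Injective f)
    (hdim : finrank K V = finrank K U + finrank K W) :
    Function.Surjective g := by
  have hker : finrank K (LinearMap.ker g) = finrank K U := by
    rw [LinearMap.exact_iff.mp hfg, LinearMap.finrank_range_of_inj hf]
  have hrange : finrank K (LinearMap.range g) = finrank K W := by
    have := LinearMap.finrank_range_add_finrank_ker g
    omega
  exact LinearMap.range_eq_top.mp (Submodule.eq_top_of_finrank_eq hrange)

section HomFromFixedModule

variable {k A : Type*} [Field k] [Ring A] [Algebra k A] {M N E F : Type*}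
  [AddCommGroup M] [Module A M]
  [AddCommGroup N] [Module A N] [Module k N] [IsScalarTower k A N]
  [AddCommGroup E] [Module A E] [Module k E] [IsScalarTower k A E]
  [AddCommGroup F] [Module A F] [Module k F] [IsScalarTower k A F]

theorem Module.Finite.linearMap_of_isScalarTower [Module k M] [IsScalarTower k A M]
    [Module.Finite k M] [Module.Finite k N] :
    Module.Finite k (M →ₗ[A] N) :=
  Module.Finite.of_injective (LinearMap.restrictScalarsₗ k A M N k)
    (LinearMap.restrictScalars_injective k)

variable (k M)

theorem LinearMap.compRight_injective {i : N →ₗ[A] E} (hi : Function.Injective i) :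
    Function.Injective (LinearMap.compRight k (M := M) i) :=
  fun _ _ h => LinearMap.ext fun x => hi (LinearMap.congr_fun h x)

theorem LinearMap.exact_compRight_of_exact_of_injective {i : N →ₗ[A] E} {p : E →ₗ[A] F}
    (hex : Function.Exact i p) (hi : Function.Injective i) :
    Function.Exact (LinearMap.compRight k (M := M) i) (LinearMap.compRight k p) := by
  intro f
  constructor
  · intro hf
    have hmem : ∀ x, f x ∈ LinearMap.range i := fun x =>
      (LinearMap.exact_iff.mp hex) ▸ LinearMap.congr_fun hf x
    refine ⟨(LinearEquiv.ofInjective i hi).symm.toLinearMap ∘ₗ f.codRestrict _ hmem, ?_⟩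
    ext x
    exact congrArg Subtype.val ((LinearEquiv.ofInjective i hi).apply_symm_apply ⟨f x, hmem x⟩)
  · rintro ⟨g, rfl⟩
    exact LinearMap.ext fun x => hex.apply_apply_eq_zero (g x)

def LinearEquiv.compRight (φ : E ≃ₗ[A] F) : (M →ₗ[A] E) ≃ₗ[k] (M →ₗ[A] F) :=
  LinearEquiv.ofLinearMap (LinearMap.compRight k φ.toLinearMap)
    (LinearMap.compRight k φ.symm.toLinearMap)
    (LinearMap.ext fun f => LinearMap.ext fun x => φ.apply_symm_apply (f x))
    (LinearMap.ext fun f => LinearMap.ext fun x => φ.symm_apply_apply (f x))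

variable {k M}

theorem exists_comp_eq_id_of_linearEquiv_prod [Module k M] [IsScalarTower k A M]
    [Module.Finite k M] [Module.Finite k N]
    {i : N →ₗ[A] E} {p : E →ₗ[A] M} (hex : Function.Exact i p) (hi : Function.Injective i)
    (φ : E ≃ₗ[A] M × N) :
    ∃ s : M →ₗ[A] E, p ∘ₗ s = LinearMap.id := by
  have : Module.Finite k E := .equiv (φ.symm.restrictScalars k)
  have : Module.Finite k (M →ₗ[A] M) := .linearMap_of_isScalarTower
  have : Module.Finite k (M →ₗ[A] N) := .linearMap_of_isScalarTower
  have : Module.Finite k (M →ₗ[A] E) := .linearMap_of_isScalarTower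
  have hdim : finrank k (M →ₗ[A] E) = finrank k (M →ₗ[A] N) + finrank k (M →ₗ[A] M) :=
    calc finrank k (M →ₗ[A] E) = finrank k (M →ₗ[A] M × N) :=
          (LinearEquiv.compRight k M φ).finrank_eq
      _ = finrank k ((M →ₗ[A] M) × (M →ₗ[A] N)) := (LinearMap.prodEquiv k).symm.finrank_eq
      _ = finrank k (M →ₗ[A] N) + finrank k (M →ₗ[A] M) := by rw [finrank_prod, add_comm]
  exact ((LinearMap.exact_compRight_of_exact_of_injective k M hex hi).surjective_of_finrank_eq_add
    (LinearMap.compRight_injective k M hi) hdim) LinearMap.id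

end HomFromFixedModule

theorem stmt15_general (k : Type) [Field k] (A : Type) [Ring A] [Algebra k A]
    (M N E : ModuleCat A)
    [FiniteDimensional k M] [FiniteDimensional k N]
    (i : N ⟶ E) (p : E ⟶ M)
    (hi : Function.Injective i)
    (hex : LinearMap.range i.hom = LinearMap.ker p.hom)
    (hnonsplit : ¬ ∃ s : M ⟶ E, s ≫ p = 𝟙 M) :
    ¬ Nonempty (↥E ≃ₗ[A] (↥M × ↥N)) := by
  rintro ⟨φ⟩
  obtain ⟨s, hs⟩ :=
    exists_comp_eq_id_of_linearEquiv_prod (k := k) (LinearMap.exact_iff.mpr hex.symm) hi φ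
  exact hnonsplit ⟨ModuleCat.ofHom s, ModuleCat.hom_ext hs⟩

/-- Over a finite-dimensional hereditary `k`-algebra `A` (e.g. the path
algebra of an acyclic quiver), if `M`, `N` are indecomposable rigid modules with
`dim_k Ext¹(M,N) = 1` and `N ≇ 0`, then the middle term `E` of any non-split short
exact sequence `0 → N → E → M → 0` is not isomorphic to `M ⊕ N`. -/
theorem stmt15 (k : Type) [Field k] (A : Type) [Ring A] [Algebra k A]
    [FiniteDimensional k A]
    (hher : ∀ X Y : ModuleCat A,
      Subsingleton (((Ext k (ModuleCat A) 2).obj (Opposite.op X)).obj Y))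
    (M N E : ModuleCat A)
    [FiniteDimensional k M] [FiniteDimensional k N] [FiniteDimensional k E]
    (hN : Nontrivial N)
    (hindM : ∀ e : M ⟶ M, e ≫ e = e → e = 0 ∨ e = 𝟙 M)
    (hindN : ∀ e : N ⟶ N, e ≫ e = e → e = 0 ∨ e = 𝟙 N)
    (hrigM : extDim k A 1 M M = 0)
    (hrigN : extDim k A 1 N N = 0)
    (hext1 : extDim k A 1 M N = 1)
    (i : N ⟶ E) (p : E ⟶ M)
    (hi : Function.Injective i) (hp : Function.Surjective p)
    (hex : LinearMap.range i.hom = LinearMap.ker p.hom)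
    (hnonsplit : ¬ ∃ s : M ⟶ E, s ≫ p = 𝟙 M) :
    ¬ Nonempty (↥E ≃ₗ[A] (↥M × ↥N)) :=
  stmt15_general k A M N E i p hi hex hnonsplit

end
end
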